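/- (Bose) For n ≥ 3, every cap of PG(n,2) has at most 2^n points; moreover, for every hyperplane H of PG(n,2) (i.e., every n-dimensional subspace of F_2^{n+1}), the set of points of PG(n,2) not contained in H is a cap of exactly 2^n points. -/

import Mathlib

/-!
Over `𝔽₂` every point of `PG(n,2)` has a unique nonzero representative, and three distinct
points are collinear exactly when one representative is the sum of the other two. A cap thus
gives a set `S` of nonzero vectors with no `a + b ∈ S` for `a, b ∈ S`, so for `s ∈ S` the
translate `s + S` is disjoint from `S`, whence `2 |S| ≤ 2^(n+1)`. The vectors outside a
hyperplane `H` form the nontrivial coset of `H`, so the sum of any two of them lies in `H`;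
there are `2^(n+1) - 2^n = 2^n` of them.
-/

/-- No three points of the set `A ⊆ PG(n,q)` are collinear, where three points are
collinear if their representative vectors span a subspace of dimension at most 2. -/
def NoThreeCollinear (n : ℕ) (F : Type) [Field F]
    (A : Set (Projectivization F (Fin (n + 1) → F))) : Prop :=
  ∀ p₁ ∈ A, ∀ p₂ ∈ A, ∀ p₃ ∈ A, p₁ ≠ p₂ → p₁ ≠ p₃ → p₂ ≠ p₃ →
    ¬ (Module.finrank F ↥(p₁.submodule ⊔ p₂.submodule ⊔ p₃.submodule) ≤ 2)

open Projectivization Submodule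
open scoped LinearAlgebra.Projectivization

section FieldOfCardTwo

variable {F : Type*} [Field F] [Fintype F]

theorem units_eq_one_of_card_eq_two (hF : Fintype.card F = 2) (a : Fˣ) : a = 1 := by
  classical
  exact Fintype.card_le_one_iff.mp (by rw [Fintype.card_units, hF]) a 1

theorem eq_zero_or_eq_one_of_card_eq_two (hF : Fintype.card F = 2) (a : F) : a = 0 ∨ a = 1 :=
  or_iff_not_imp_left.mpr fun ha ↦
    congrArg Units.val (units_eq_one_of_card_eq_two hF (Units.mk0 a ha))

theorem add_self_eq_zero_of_card_eq_two {V : Type*} [AddCommGroup V] [Module F V]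
    (hF : Fintype.card F = 2) (v : V) : v + v = 0 := by
  have : CharP F 2 := charP_of_card_eq_prime hF
  rw [← two_smul F v, CharTwo.two_eq_zero, zero_smul]

end FieldOfCardTwo

namespace Projectivization

section DivisionRing

variable {K V : Type*} [DivisionRing K] [AddCommGroup V] [Module K V]

theorem rep_injective : Function.Injective (Projectivization.rep : ℙ K V → V) := by
  intro p q h
  rw [← p.mk_rep, ← q.mk_rep]
  simp only [h]

theorem submodule_le_iff_rep_mem (p : ℙ K V) (W : Submodule K V) :
    p.submodule ≤ W ↔ p.rep ∈ W := by
  rw [submodule_eq, span_singleton_le_iff_mem]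

instance (p : ℙ K V) : FiniteDimensional K p.submodule :=
  Module.finite_of_finrank_eq_succ p.finrank_submodule

theorem finrank_sup_submodule_eq_two {p q : ℙ K V} (hpq : p ≠ q) :
    Module.finrank K ↥(p.submodule ⊔ q.submodule) = 2 := by
  rw [submodule_eq, submodule_eq, ← span_insert, ← Matrix.range_cons_cons_empty _ _ ![]]
  simpa using finrank_span_eq_card (linearIndependent_pair_iff_ne.mpr hpq)

theorem finrank_sup_sup_le_two_iff {p q r : ℙ K V} (hpq : p ≠ q) :
    Module.finrank K ↥(p.submodule ⊔ q.submodule ⊔ r.submodule) ≤ 2 ↔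
      r.rep ∈ p.submodule ⊔ q.submodule := by
  rw [← submodule_le_iff_rep_mem]
  constructor
  · intro h
    have := eq_of_le_of_finrank_le (le_sup_left : p.submodule ⊔ q.submodule ≤ _)
      (h.trans (finrank_sup_submodule_eq_two hpq).ge)
    exact this ▸ le_sup_right
  · intro h
    rw [sup_eq_left.mpr h]
    calc Module.finrank K ↥(p.submodule ⊔ q.submodule)
        ≤ Module.finrank K p.submodule + Module.finrank K q.submodule :=
          finrank_add_le_finrank_add_finrank _ _
      _ = 2 := by rw [finrank_submodule, finrank_submodule]

end DivisionRing

section FieldOfCardTwo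

variable {F V : Type*} [Field F] [Fintype F] [AddCommGroup V] [Module F V]

theorem rep_mk_of_card_eq_two (hF : Fintype.card F = 2) {v : V} (hv : v ≠ 0) :
    (mk F v hv).rep = v := by
  obtain ⟨a, ha⟩ := exists_smul_eq_mk_rep F v hv
  rw [← ha, units_eq_one_of_card_eq_two hF a, one_smul]

theorem rep_mem_sup_iff_of_card_eq_two (hF : Fintype.card F = 2) {p q r : ℙ F V}
    (hrp : r ≠ p) (hrq : r ≠ q) :
    r.rep ∈ p.submodule ⊔ q.submodule ↔ r.rep = p.rep + q.rep := by
  rw [submodule_eq, submodule_eq, ← span_insert, mem_span_pair]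
  constructor
  · rintro ⟨a, b, hab⟩
    rcases eq_zero_or_eq_one_of_card_eq_two hF a with rfl | rfl <;>
      rcases eq_zero_or_eq_one_of_card_eq_two hF b with rfl | rfl <;>
        simp only [zero_smul, one_smul, zero_add, add_zero] at hab
    · exact absurd hab.symm r.rep_nonzero
    · exact absurd (rep_injective hab).symm hrq
    · exact absurd (rep_injective hab).symm hrp
    · exact hab.symm
  · intro h
    exact ⟨1, 1, by rw [one_smul, one_smul, h]⟩

theorem finrank_sup_sup_le_two_iff_of_card_eq_two (hF : Fintype.card F = 2) {p q r : ℙ F V}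
    (hpq : p ≠ q) (hrp : r ≠ p) (hrq : r ≠ q) :
    Module.finrank F ↥(p.submodule ⊔ q.submodule ⊔ r.submodule) ≤ 2 ↔
      r.rep = p.rep + q.rep := by
  rw [finrank_sup_sup_le_two_iff hpq, rep_mem_sup_iff_of_card_eq_two hF hrp hrq]

end FieldOfCardTwo

end Projectivization

theorem two_mul_ncard_le_of_add_notMem {G : Type*} [AddGroup G] [Finite G] {S : Set G}
    (hS : ∀ a ∈ S, ∀ b ∈ S, a + b ∉ S) : 2 * S.ncard ≤ Nat.card G := by
  rcases S.eq_empty_or_nonempty with rfl | ⟨s, hs⟩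
  · simp
  have hdisj : Disjoint S ((s + ·) '' S) := by
    rw [Set.disjoint_right]
    rintro _ ⟨b, hb, rfl⟩
    exact hS s hs b hb
  calc 2 * S.ncard = (S ∪ (s + ·) '' S).ncard := by
        rw [Set.ncard_union_eq hdisj, Set.ncard_image_of_injective _ (add_right_injective s)]
        ring
    _ ≤ Nat.card G := Set.ncard_le_card _

theorem Submodule.add_mem_of_notMem_of_card_eq_two {F V : Type*} [Field F] [Fintype F]
    [AddCommGroup V] [Module F V] [FiniteDimensional F V] (hF : Fintype.card F = 2)
    {H : Submodule F V} (hH : Module.finrank F H + 1 = Module.finrank F V) {u v : V}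
    (hu : u ∉ H) (hv : v ∉ H) : u + v ∈ H := by
  have hQ : Module.finrank F (V ⧸ H) = 1 := by
    have := H.finrank_quotient_add_finrank
    omega
  have hu' : H.mkQ u ≠ 0 := by rwa [ne_eq, mkQ_apply, Quotient.mk_eq_zero]
  obtain ⟨c, hc⟩ := (finrank_eq_one_iff_of_nonzero' _ hu').mp hQ (H.mkQ v)
  rcases eq_zero_or_eq_one_of_card_eq_two hF c with rfl | rfl
  · rw [zero_smul, eq_comm, mkQ_apply, Quotient.mk_eq_zero] at hc
    exact absurd hc hv
  · rw [← Quotient.mk_eq_zero, Quotient.mk_add, ← mkQ_apply, ← mkQ_apply, ← hc, one_smul,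
      add_self_eq_zero_of_card_eq_two hF]

theorem ncard_setOf_not_submodule_le_of_card_eq_two {F V : Type*} [Field F] [Fintype F]
    [AddCommGroup V] [Module F V] [FiniteDimensional F V] (hF : Fintype.card F = 2)
    {H : Submodule F V} (hH : Module.finrank F H + 1 = Module.finrank F V) :
    {p : ℙ F V | ¬ p.submodule ≤ H}.ncard = 2 ^ Module.finrank F H := by
  have hnatCard_F : Nat.card F = 2 := by rw [Nat.card_eq_fintype_card, hF]
  have himage : Projectivization.rep '' {p : ℙ F V | ¬ p.submodule ≤ H} = (H : Set V)ᶜ := by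
    have hpre : {p : ℙ F V | ¬ p.submodule ≤ H} = Projectivization.rep ⁻¹' (H : Set V)ᶜ := by
      ext p
      simp [submodule_le_iff_rep_mem]
    rw [hpre, Set.image_preimage_eq_of_subset]
    intro v hv
    have hv0 : v ≠ 0 := fun h ↦ hv (h ▸ H.zero_mem)
    exact ⟨mk F v hv0, rep_mk_of_card_eq_two hF hv0⟩
  have : Finite V := Module.finite_of_finite F
  rw [← Set.ncard_image_of_injective _ rep_injective, himage, Set.ncard_compl,
    ← Nat.card_coe_set_eq, SetLike.coe_sort_coe, Module.natCard_eq_pow_finrank (K := F) (V := V),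
    Module.natCard_eq_pow_finrank (K := F) (V := H), hnatCard_F, ← hH, pow_succ]
  omega

section PG_n_2

variable {n : ℕ} {F : Type} [Field F] [Fintype F]

theorem ncard_le_of_noThreeCollinear (hF : Fintype.card F = 2)
    {A : Set (ℙ F (Fin (n + 1) → F))} (hA : NoThreeCollinear n F A) : A.ncard ≤ 2 ^ n := by
  have hsumfree : ∀ a ∈ Projectivization.rep '' A, ∀ b ∈ Projectivization.rep '' A,
      a + b ∉ Projectivization.rep '' A := by
    rintro _ ⟨p, hp, rfl⟩ _ ⟨q, hq, rfl⟩ ⟨r, hr, hsum⟩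
    have hpq : p ≠ q := by
      rintro rfl
      exact r.rep_nonzero (hsum.trans (add_self_eq_zero_of_card_eq_two hF _))
    have hrp : r ≠ p := by
      rintro rfl
      exact q.rep_nonzero (add_eq_left.mp hsum.symm)
    have hrq : r ≠ q := by
      rintro rfl
      exact p.rep_nonzero (add_eq_right.mp hsum.symm)
    exact hA p hp q hq r hr hpq hrp.symm hrq.symm
      ((finrank_sup_sup_le_two_iff_of_card_eq_two hF hpq hrp hrq).mpr hsum)
  have hcard : Nat.card (Fin (n + 1) → F) = 2 ^ (n + 1) := by
    simp [Nat.card_eq_fintype_card, hF]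
  have := two_mul_ncard_le_of_add_notMem hsumfree
  rw [Set.ncard_image_of_injective A rep_injective, hcard, pow_succ] at this
  omega

theorem noThreeCollinear_setOf_not_submodule_le (hF : Fintype.card F = 2)
    {H : Submodule F (Fin (n + 1) → F)} (hH : Module.finrank F H = n) :
    NoThreeCollinear n F {p | ¬ p.submodule ≤ H} := by
  have hcodim : Module.finrank F H + 1 = Module.finrank F (Fin (n + 1) → F) := by simp [hH]
  intro p hp q hq r hr hpq hpr hqr hcol
  simp only [submodule_le_iff_rep_mem] at hp hq hr
  rw [finrank_sup_sup_le_two_iff_of_card_eq_two hF hpq hpr.symm hqr.symm] at hcol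
  exact hr (hcol ▸ H.add_mem_of_notMem_of_card_eq_two hF hcodim hp hq)

end PG_n_2

theorem bose_caps_in_PG_n_2_general (n : ℕ) (F : Type) [Field F] [Fintype F]
    (hF : Fintype.card F = 2) :
    (∀ A : Set (Projectivization F (Fin (n + 1) → F)),
        NoThreeCollinear n F A → A.ncard ≤ 2 ^ n) ∧
    (∀ H : Submodule F (Fin (n + 1) → F), Module.finrank F H = n →
        NoThreeCollinear n F {p | ¬ p.submodule ≤ H} ∧
        {p : Projectivization F (Fin (n + 1) → F) | ¬ p.submodule ≤ H}.ncard = 2 ^ n) := by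
  refine ⟨fun A hA ↦ ncard_le_of_noThreeCollinear hF hA, fun H hH ↦
    ⟨noThreeCollinear_setOf_not_submodule_le hF hH, ?_⟩⟩
  rw [ncard_setOf_not_submodule_le_of_card_eq_two hF (by simp [hH]), hH]

/-- Bose: for `n ≥ 3`, every cap of `PG(n,2)` has at most `2^n` points; moreover, for
every hyperplane `H` of `PG(n,2)` (an `n`-dimensional subspace of `F₂^{n+1}`), the set
of points not contained in `H` is a cap of exactly `2^n` points. -/
theorem bose_caps_in_PG_n_2 (n : ℕ) (hn : 3 ≤ n) (F : Type) [Field F] [Fintype F]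
    (hF : Fintype.card F = 2) :
    (∀ A : Set (Projectivization F (Fin (n + 1) → F)),
        NoThreeCollinear n F A → A.ncard ≤ 2 ^ n) ∧
    (∀ H : Submodule F (Fin (n + 1) → F), Module.finrank F H = n →
        NoThreeCollinear n F {p | ¬ p.submodule ≤ H} ∧
        {p : Projectivization F (Fin (n + 1) → F) | ¬ p.submodule ≤ H}.ncard = 2 ^ n) :=
  bose_caps_in_PG_n_2_general n F hF
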